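/- arXiv:2306.11113 — 5 statements merged into one kernel-verified Lean document; each statement's English description precedes it below -/
import Mathlib

section
/- Let α : Fin K → ℝ with α_j ≥ 1 for all j, S = ∑_j α_j, y one-hot with y_{gt} = 1. Then the evidential MSE loss L = ∑_j [(y_j - α_j/S)^2 + α_j(S - α_j)/(S^2(S+1))] satisfies 0 ≤ L ≤ 2. -/
open Finset

/-- The evidential MSE loss is bounded: 0 ≤ L ≤ 2. -/
theorem evidential_mse_bounded (K : ℕ) (hK : 2 ≤ K) (gt : Fin K)
    (α : Fin K → ℝ) (hα : ∀ j, 1 ≤ α j)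
    (S : ℝ) (hS : S = ∑ j, α j)
    (y : Fin K → ℝ) (hy : ∀ j, y j = if j = gt then 1 else 0) :
    0 ≤ (∑ j, ((y j - α j / S) ^ 2 + α j * (S - α j) / (S ^ 2 * (S + 1)))) ∧
    (∑ j, ((y j - α j / S) ^ 2 + α j * (S - α j) / (S ^ 2 * (S + 1)))) ≤ 2 := by
  have hα0 : ∀ j, (0:ℝ) ≤ α j := fun j => le_trans zero_le_one (hα j)
  have h2S : (2:ℝ) ≤ S := by
    rw [hS]
    calc (2:ℝ) ≤ (K:ℝ) := by exact_mod_cast hK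
    _ = ∑ _j : Fin K, (1:ℝ) := by simp
    _ ≤ ∑ j, α j := Finset.sum_le_sum (fun j _ => hα j)
  have hS0 : (0:ℝ) < S := by linarith
  have hjS : ∀ j, α j ≤ S := fun j => by
    rw [hS]; exact Finset.single_le_sum (fun i _ => hα0 i) (Finset.mem_univ j)
  have hD : (0:ℝ) < S ^ 2 * (S + 1) := by positivity
  set Q : ℝ := ∑ j, (α j) ^ 2 with hQ
  have hQS : Q ≤ S ^ 2 := by
    rw [hS]
    exact Finset.sum_sq_le_sq_sum_of_nonneg (fun j _ => hα0 j)
  constructor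
  · apply Finset.sum_nonneg
    intro j _
    have h1 : (0:ℝ) ≤ (y j - α j / S) ^ 2 := sq_nonneg _
    have h2 : (0:ℝ) ≤ α j * (S - α j) / (S ^ 2 * (S + 1)) := by
      apply div_nonneg _ hD.le
      exact mul_nonneg (hα0 j) (by linarith [hjS j])
    linarith
  · have hterm : ∀ j, (y j - α j / S) ^ 2 + α j * (S - α j) / (S ^ 2 * (S + 1)) =
        (y j) ^ 2 - (y j * α j) * (2 / S) +
        (α j) ^ 2 * (1 / S ^ 2 - 1 / (S ^ 2 * (S + 1))) +
        α j * (S / (S ^ 2 * (S + 1))) := by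
      intro j; ring
    have hy2 : (∑ j, (y j) ^ 2) = 1 := by
      have h : ∀ j, (y j) ^ 2 = if j = gt then (1:ℝ) else 0 := fun j => by
        rw [hy]; split <;> norm_num
      rw [Finset.sum_congr rfl (fun j _ => h j)]
      simp
    have hyα : (∑ j, y j * α j) = α gt := by
      simp only [hy, ite_mul, one_mul, zero_mul]
      simp
    have hid : (∑ j, ((y j - α j / S) ^ 2 + α j * (S - α j) / (S ^ 2 * (S + 1)))) =
        1 - α gt * (2 / S) + Q * (1 / S ^ 2 - 1 / (S ^ 2 * (S + 1))) +
        S * (S / (S ^ 2 * (S + 1))) := by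
      rw [Finset.sum_congr rfl (fun j _ => hterm j)]
      rw [Finset.sum_add_distrib, Finset.sum_add_distrib, Finset.sum_sub_distrib,
        ← Finset.sum_mul, ← Finset.sum_mul, ← Finset.sum_mul, hy2, hyα, hQ, ← hS]
    rw [hid]
    have hfrac : 1 - α gt * (2 / S) + Q * (1 / S ^ 2 - 1 / (S ^ 2 * (S + 1))) +
        S * (S / (S ^ 2 * (S + 1))) =
        (S ^ 2 * (S + 1) - 2 * α gt * S * (S + 1) + Q * S + S ^ 2) / (S ^ 2 * (S + 1)) := by
      field_simp
      ring
    rw [hfrac, div_le_iff₀ hD]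
    nlinarith [hα0 gt, hQS, hS0, mul_nonneg (hα0 gt) hS0.le]
end

section
/- With ReLU activation, if all logits satisfy o_k ≤ 0 (a zero-evidence sample), then the gradient of the evidential MSE loss with respect to every logit is zero, so the model receives no update from such a sample. -/
open Finset

/-- With ReLU activation, a zero-evidence sample (all logits nonpositive) yields
zero gradient of the evidential MSE loss with respect to every logit. -/
theorem relu_zero_evidence_zero_gradient (K : ℕ) (hK : 2 ≤ K) (gt : Fin K)
    (o : Fin K → ℝ) (ho : ∀ j, o j ≤ 0)
    (y : Fin K → ℝ) (hy : ∀ j, y j = if j = gt then 1 else 0) :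
    ∀ k, o k < 0 →
      HasDerivAt
        (fun t : ℝ =>
          let e : Fin K → ℝ := fun i => max 0 (Function.update o k t i)
          let α : Fin K → ℝ := fun i => e i + 1
          let S : ℝ := ∑ i, α i
          ∑ j, ((y j - α j / S) ^ 2 + α j * (S - α j) / (S ^ 2 * (S + 1))))
        0 (o k) := by
  intro k hk
  set C : ℝ := ∑ j : Fin K, ((y j - 1 / (K : ℝ)) ^ 2 +
      1 * ((K : ℝ) - 1) / ((K : ℝ) ^ 2 * ((K : ℝ) + 1))) with hC
  have key : ∀ t : ℝ, t < 0 →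
      (∑ j : Fin K, ((y j - (max 0 (Function.update o k t j) + 1) /
          (∑ i, (max 0 (Function.update o k t i) + 1))) ^ 2 +
        (max 0 (Function.update o k t j) + 1) *
          ((∑ i, (max 0 (Function.update o k t i) + 1)) -
            (max 0 (Function.update o k t j) + 1)) /
          ((∑ i, (max 0 (Function.update o k t i) + 1)) ^ 2 *
            ((∑ i, (max 0 (Function.update o k t i) + 1)) + 1)))) = C := by
    intro t ht
    have hm : ∀ i, max 0 (Function.update o k t i) = 0 := by
      intro i
      rcases eq_or_ne i k with rfl | h
      · simp [Function.update_self, le_of_lt ht]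
      · simp [Function.update_of_ne h, ho i]
    simp only [hm, zero_add]
    have hS : (∑ _i : Fin K, (1 : ℝ)) = (K : ℝ) := by simp
    rw [hS, hC]
  have heq : (fun t : ℝ =>
      let e : Fin K → ℝ := fun i => max 0 (Function.update o k t i)
      let α : Fin K → ℝ := fun i => e i + 1
      let S : ℝ := ∑ i, α i
      ∑ j, ((y j - α j / S) ^ 2 + α j * (S - α j) / (S ^ 2 * (S + 1))))
      =ᶠ[nhds (o k)] fun _ => C := by
    filter_upwards [Iio_mem_nhds hk] with t ht
    exact key t ht
  exact (hasDerivAt_const (o k) C).congr_of_eventuallyEq heq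
end

section
/- With exponential activation, as all logits o_k → -∞ (so that all evidences e_k = exp(o_k) → 0), the gradient of the Type II maximum likelihood loss with respect to every logit tends to 0. -/
open Filter

/-- With exponential activation, as all logits tend to -∞ (all evidence → 0),
every partial derivative of the Type II maximum likelihood loss tends to 0. -/
theorem exp_zero_evidence_gradient_tendsto_zero (K : ℕ) (hK : 2 ≤ K)
    (gt k : Fin K) :
    Tendsto
      (fun o : Fin K → ℝ =>
        let α : Fin K → ℝ := fun j => Real.exp (o j) + 1
        let S : ℝ := ∑ j, α j
        let y : Fin K → ℝ := fun j => if j = gt then 1 else 0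
        (1 / S - y k / α k) * (α k - 1))
      (Filter.pi fun _ : Fin K => atBot) (nhds 0) := by
  simp only
  have hproj : Tendsto (fun o : Fin K → ℝ => o k) (Filter.pi fun _ : Fin K => atBot) atBot :=
    Filter.tendsto_eval_pi _ k
  have h0 : Tendsto (fun o : Fin K → ℝ => Real.exp (o k))
      (Filter.pi fun _ : Fin K => atBot) (nhds 0) :=
    Real.tendsto_exp_atBot.comp hproj
  have hK0 : (0:ℝ) < K := by
    have : 0 < K := Nat.lt_of_lt_of_le two_pos hK
    exact_mod_cast this
  have hb : ∀ o : Fin K → ℝ,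
      |1 / (∑ j, (Real.exp (o j) + 1)) -
        (if k = gt then (1:ℝ) else 0) / (Real.exp (o k) + 1)| ≤ 2 := by
    intro o
    have hα : ∀ j, (1:ℝ) ≤ Real.exp (o j) + 1 := fun j => by nlinarith [Real.exp_pos (o j)]
    have hS : (K:ℝ) ≤ ∑ j, (Real.exp (o j) + 1) := by
      calc (K:ℝ) = ∑ _j : Fin K, (1:ℝ) := by simp
        _ ≤ _ := Finset.sum_le_sum fun j _ => hα j
    have hSpos : (0:ℝ) < ∑ j, (Real.exp (o j) + 1) := lt_of_lt_of_le hK0 hS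
    have h1 : (0:ℝ) ≤ 1 / (∑ j, (Real.exp (o j) + 1)) := by positivity
    have h2 : 1 / (∑ j, (Real.exp (o j) + 1)) ≤ 1 := by
      rw [div_le_one hSpos]
      have : (1:ℝ) ≤ K := by
        have : 1 ≤ K := Nat.one_le_of_lt hK
        exact_mod_cast this
      linarith
    have hk := hα k
    have h3 : (0:ℝ) ≤ (if k = gt then (1:ℝ) else 0) / (Real.exp (o k) + 1) := by
      split <;> positivity
    have h4 : (if k = gt then (1:ℝ) else 0) / (Real.exp (o k) + 1) ≤ 1 := by
      apply div_le_one_of_le₀ _ (by linarith)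
      split <;> linarith
    rw [abs_le]
    constructor <;> linarith
  have hbdd : IsBoundedUnder (· ≤ ·) (Filter.pi fun _ : Fin K => atBot)
      (norm ∘ fun o : Fin K → ℝ =>
        1 / (∑ j, (Real.exp (o j) + 1)) -
          (if k = gt then (1:ℝ) else 0) / (Real.exp (o k) + 1)) :=
    isBoundedUnder_of ⟨2, fun o => hb o⟩
  have hmain := h0.zero_mul_isBoundedUnder_le hbdd
  simp only [add_sub_cancel_right]
  convert hmain using 2 with o
  ring
end

section
/- For the EDL forward-KL incorrect-evidence regularizer with ReLU or softplus activation, the gradient with respect to an incorrect logit, (α_k - 1)(ψ'(α_k) - ψ'(S - α_{gt}))·(∂e_k/∂o_k) with ∂e_k/∂o_k ≤ 1, tends to 0 as α_k → ∞ with the other parameters fixed; in contrast, with exponential activation the gradient (α_k - 1)^2(ψ'(α_k) - ψ'(S - α_{gt})) does not vanish as α_k → ∞. -/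
open Filter

/-- The trigamma function ψ'(z) = ∑_{n=0}^∞ 1/(n+z)². -/
noncomputable def trigamma (z : ℝ) : ℝ := ∑' n : ℕ, 1 / ((n : ℝ) + z) ^ 2

lemma trigamma_summable {z : ℝ} (hz : 0 < z) :
    Summable fun n : ℕ => 1 / ((n : ℝ) + z) ^ 2 := by
  have h1 : Summable fun n : ℕ => 1 / ((n : ℝ) + 1) ^ 2 := by
    have h0 : Summable fun n : ℕ => 1 / (n : ℝ) ^ 2 :=
      Real.summable_one_div_nat_pow.mpr (by norm_num)
    have := (summable_nat_add_iff (f := fun n : ℕ => 1 / (n : ℝ) ^ 2) 1).mpr h0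
    simpa [Nat.cast_add] using this
  set m := min z 1 with hm
  have hm0 : 0 < m := lt_min hz one_pos
  have hm1 : m ≤ 1 := min_le_right _ _
  have hmz : m ≤ z := min_le_left _ _
  have hb : ∀ n : ℕ, 1 / ((n : ℝ) + z) ^ 2 ≤ (1 / m ^ 2) * (1 / ((n : ℝ) + 1) ^ 2) := by
    intro n
    have hn : (0 : ℝ) ≤ (n : ℝ) := Nat.cast_nonneg n
    have key : m * ((n : ℝ) + 1) ≤ (n : ℝ) + z := by nlinarith
    have h2 : (m * ((n : ℝ) + 1)) ^ 2 ≤ ((n : ℝ) + z) ^ 2 := by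
      apply pow_le_pow_left₀ (by positivity) key
    calc 1 / ((n : ℝ) + z) ^ 2 ≤ 1 / (m * ((n : ℝ) + 1)) ^ 2 :=
          one_div_le_one_div_of_le (by positivity) h2
      _ = (1 / m ^ 2) * (1 / ((n : ℝ) + 1) ^ 2) := by
          rw [mul_pow, one_div_mul_one_div]
  exact Summable.of_nonneg_of_le (fun n => by positivity) hb (h1.mul_left _)

lemma telescope_hasSum {z : ℝ} (hz : 0 < z) :
    HasSum (fun n : ℕ => 1 / ((n : ℝ) + z) - 1 / ((n : ℝ) + 1 + z)) (1 / z) := by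
  have hnn : ∀ n : ℕ, 0 ≤ 1 / ((n : ℝ) + z) - 1 / ((n : ℝ) + 1 + z) := by
    intro n
    have : 1 / ((n : ℝ) + 1 + z) ≤ 1 / ((n : ℝ) + z) :=
      one_div_le_one_div_of_le (by positivity) (by linarith)
    linarith
  rw [hasSum_iff_tendsto_nat_of_nonneg hnn]
  have hsum : ∀ N : ℕ, ∑ i ∈ Finset.range N, (1 / ((i : ℝ) + z) - 1 / ((i : ℝ) + 1 + z))
      = 1 / z - 1 / ((N : ℝ) + z) := by
    intro N
    have := Finset.sum_range_sub' (fun i : ℕ => 1 / ((i : ℝ) + z)) N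
    simp only [Nat.cast_zero, zero_add] at this
    rw [← this]
    apply Finset.sum_congr rfl
    intro i _
    push_cast
    ring_nf
  simp only [hsum]
  have h1 : Tendsto (fun N : ℕ => 1 / ((N : ℝ) + z)) atTop (nhds 0) := by
    apply Tendsto.comp tendsto_inv_atTop_zero (f := fun N : ℕ => (N : ℝ) + z) ?_ |>.congr
    · intro N; simp [one_div]
    · exact tendsto_atTop_add_const_right _ z tendsto_natCast_atTop_atTop
  have := (tendsto_const_nhds (x := 1 / z) (f := atTop (α := ℕ))).sub h1
  simpa using this

lemma trigamma_rec {z : ℝ} (hz : 0 < z) :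
    trigamma z = 1 / z ^ 2 + trigamma (z + 1) := by
  unfold trigamma
  rw [Summable.tsum_eq_zero_add (trigamma_summable hz)]
  congr 1
  · norm_num
  · apply tsum_congr
    intro n
    push_cast
    ring_nf

lemma trigamma_anti {a b : ℝ} (ha : 0 < a) (hab : a ≤ b) : trigamma b ≤ trigamma a := by
  apply Summable.tsum_le_tsum _ (trigamma_summable (lt_of_lt_of_le ha hab)) (trigamma_summable ha)
  intro n
  apply one_div_le_one_div_of_le (by positivity)
  have : (0:ℝ) ≤ (n:ℝ) := Nat.cast_nonneg n
  nlinarith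

lemma trigamma_le {z : ℝ} (hz : 0 < z) : trigamma z ≤ 1 / z ^ 2 + 1 / z := by
  rw [trigamma_rec hz]
  have h : trigamma (z + 1) ≤ 1 / z := by
    have htel := telescope_hasSum hz
    rw [← htel.tsum_eq]
    apply Summable.tsum_le_tsum _ (trigamma_summable (by linarith)) htel.summable
    intro n
    have hn : (0:ℝ) ≤ (n:ℝ) := Nat.cast_nonneg n
    have heq : 1 / ((n : ℝ) + z) - 1 / ((n : ℝ) + 1 + z)
        = 1 / (((n : ℝ) + z) * ((n : ℝ) + 1 + z)) := by
      field_simp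
      try ring
    rw [heq]
    have : ((n : ℝ) + (z + 1)) ^ 2 = ((n:ℝ) + 1 + z) * ((n:ℝ) + 1 + z) := by ring
    rw [this]
    apply one_div_le_one_div_of_le (by positivity)
    nlinarith
  linarith

lemma le_trigamma {z : ℝ} (hz : 0 < z) : 1 / z ≤ trigamma z := by
  have htel := telescope_hasSum hz
  rw [← htel.tsum_eq]
  apply Summable.tsum_le_tsum _ htel.summable (trigamma_summable hz)
  intro n
  have hn : (0:ℝ) ≤ (n:ℝ) := Nat.cast_nonneg n
  have heq : 1 / ((n : ℝ) + z) - 1 / ((n : ℝ) + 1 + z)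
      = 1 / (((n : ℝ) + z) * ((n : ℝ) + 1 + z)) := by
    field_simp
    try ring
  rw [heq]
  have : ((n : ℝ) + z) ^ 2 = ((n:ℝ) + z) * ((n:ℝ) + z) := sq ((n:ℝ)+z)
  rw [this]
  apply one_div_le_one_div_of_le (by positivity)
  nlinarith

lemma trigamma_convex_step {a r : ℝ} (ha : 0 < a) (h0 : 0 ≤ r) (h1 : r ≤ 1) :
    trigamma (a + r) ≤ (1 - r) * trigamma a + r * trigamma (a + 1) := by
  unfold trigamma
  have hsa := trigamma_summable ha
  have hsa1 := trigamma_summable (show (0:ℝ) < a + 1 by linarith)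
  have hterm : ∀ n : ℕ, 1 / ((n : ℝ) + (a + r)) ^ 2
      ≤ (1 - r) * (1 / ((n : ℝ) + a) ^ 2) + r * (1 / ((n : ℝ) + (a + 1)) ^ 2) := by
    intro n
    have hn : (0:ℝ) ≤ (n:ℝ) := Nat.cast_nonneg n
    have hx : ((n : ℝ) + a) ∈ Set.Ioi (0:ℝ) := by simp; linarith
    have hy : ((n : ℝ) + a + 1) ∈ Set.Ioi (0:ℝ) := by simp; linarith
    have hconv := (convexOn_zpow (𝕜 := ℝ) (-2)).2 hx hy (by linarith : (0:ℝ) ≤ 1 - r) h0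
      (by ring : (1 - r) + r = 1)
    simp only [smul_eq_mul] at hconv
    have hzp : ∀ x : ℝ, 0 < x → x ^ (-2 : ℤ) = 1 / x ^ 2 := by
      intro x hx
      rw [zpow_neg, one_div]
      norm_cast
    rw [hzp _ (by linarith), hzp _ (by linarith), hzp _ (by positivity)] at hconv
    calc 1 / ((n : ℝ) + (a + r)) ^ 2
        = 1 / ((1 - r) * ((n:ℝ) + a) + r * ((n:ℝ) + a + 1)) ^ 2 := by ring_nf
      _ ≤ (1 - r) * (1 / ((n : ℝ) + a) ^ 2) + r * (1 / ((n : ℝ) + (a + 1)) ^ 2) := by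
          have he : (n:ℝ) + (a + 1) = (n:ℝ) + a + 1 := by ring
          rw [he]
          exact hconv
  rw [← tsum_mul_left, ← tsum_mul_left,
    ← Summable.tsum_add (hsa.mul_left _) (hsa1.mul_left _)]
  exact Summable.tsum_le_tsum hterm (trigamma_summable (by linarith))
    ((hsa.mul_left _).add (hsa1.mul_left _))

/-- For the EDL forward-KL incorrect-evidence regularizer: with ReLU or softplus
activation (derivative factor d with 0 ≤ d ≤ 1), the incorrect-logit gradient
(α_k - 1)(ψ'(α_k) - ψ'(R + α_k)) d(α_k) tends to 0 as α_k → ∞, whereas with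
exponential activation the gradient (α_k - 1)²(ψ'(α_k) - ψ'(R + α_k)) does not
tend to 0. Here R = (S - α_gt) - α_k > 0 is the remaining incorrect mass. -/
theorem edl_kl_reg_gradient_asymptotics (R : ℝ) (hR : 0 < R)
    (d : ℝ → ℝ) (hd : ∀ a, 0 ≤ d a ∧ d a ≤ 1) :
    Tendsto (fun a : ℝ => (a - 1) * (trigamma a - trigamma (R + a)) * d a)
        atTop (nhds 0) ∧
      ¬ Tendsto (fun a : ℝ => (a - 1) ^ 2 * (trigamma a - trigamma (R + a)))
        atTop (nhds 0) := by
  have hdiff_nonneg : ∀ a : ℝ, 0 < a → 0 ≤ trigamma a - trigamma (R + a) := by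
    intro a ha
    have := trigamma_anti ha (by linarith : a ≤ R + a)
    linarith
  constructor
  · -- squeeze between 0 and (1+R)/a
    apply squeeze_zero' (g := fun a : ℝ => (1 + R) / a)
    · filter_upwards [eventually_ge_atTop (1:ℝ)] with a ha
      have ha0 : (0:ℝ) < a := by linarith
      have h1 : 0 ≤ a - 1 := by linarith
      have h2 := hdiff_nonneg a ha0
      have h3 := (hd a).1
      positivity
    · filter_upwards [eventually_ge_atTop (1:ℝ)] with a ha
      have ha0 : (0:ℝ) < a := by linarith
      have hRa : (0:ℝ) < R + a := by linarith
      have hub : trigamma a - trigamma (R + a) ≤ (1 + R) / a ^ 2 := by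
        have h1 := trigamma_le ha0
        have h2 := le_trigamma hRa
        have h3 : 1 / a - 1 / (R + a) ≤ R / a ^ 2 := by
          rw [div_sub_div _ _ (ne_of_gt ha0) (ne_of_gt hRa), div_le_div_iff₀ (by positivity)
            (by positivity)]
          nlinarith [mul_nonneg (mul_nonneg hR.le hR.le) ha0.le]
        have : (1 + R) / a ^ 2 = 1 / a ^ 2 + R / a ^ 2 := by ring
        linarith
      have hnn : 0 ≤ (a - 1) * (trigamma a - trigamma (R + a)) := by
        have := hdiff_nonneg a ha0
        have h1 : 0 ≤ a - 1 := by linarith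
        positivity
      calc (a - 1) * (trigamma a - trigamma (R + a)) * d a
          ≤ (a - 1) * (trigamma a - trigamma (R + a)) * 1 :=
            mul_le_mul_of_nonneg_left (hd a).2 hnn
        _ = (a - 1) * (trigamma a - trigamma (R + a)) := mul_one _
        _ ≤ (a - 1) * ((1 + R) / a ^ 2) :=
            mul_le_mul_of_nonneg_left hub (by linarith)
        _ ≤ (1 + R) / a := by
            have he : (a - 1) * ((1 + R) / a ^ 2) = (1 + R) * (a - 1) / a ^ 2 := by ring
            rw [he, div_le_div_iff₀ (by positivity) ha0]
            nlinarith [mul_nonneg (by linarith : (0:ℝ) ≤ 1 + R) ha0.le]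
    · have : Tendsto (fun a : ℝ => (1 + R) * a⁻¹) atTop (nhds ((1 + R) * 0)) :=
        tendsto_inv_atTop_zero.const_mul _
      simpa [div_eq_mul_inv] using this
  · intro hcon
    set r := min R 1 with hr
    have hr0 : 0 < r := lt_min hR one_pos
    have hr1 : r ≤ 1 := min_le_right _ _
    have hrR : r ≤ R := min_le_left _ _
    have hlb : ∀ a : ℝ, 2 ≤ a → r / 4 ≤ (a - 1) ^ 2 * (trigamma a - trigamma (R + a)) := by
      intro a ha
      have ha0 : (0:ℝ) < a := by linarith
      have hstep : r / a ^ 2 ≤ trigamma a - trigamma (R + a) := by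
        have h1 : trigamma (R + a) ≤ trigamma (a + r) := by
          apply trigamma_anti (by linarith) (by linarith)
        have h2 := trigamma_convex_step ha0 hr0.le hr1
        have h3 := trigamma_rec ha0
        -- trigamma a = 1/a^2 + trigamma (a+1)
        -- diff ≥ trigamma a - ((1-r) trigamma a + r trigamma (a+1)) = r (trigamma a - trigamma (a+1)) = r / a^2
        have h4 : trigamma a - trigamma (a + 1) = 1 / a ^ 2 := by linarith
        have : trigamma a - trigamma (a + r) ≥ r * (trigamma a - trigamma (a + 1)) := by nlinarith
        rw [h4] at this
        have h5 : r * (1 / a ^ 2) = r / a ^ 2 := by ring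
        linarith [h1, this, h5.symm.le]
      calc r / 4 ≤ (a - 1) ^ 2 * (r / a ^ 2) := by
            have he : (a - 1) ^ 2 * (r / a ^ 2) = r * ((a - 1) ^ 2 / a ^ 2) := by ring
            have hq : (1:ℝ) / 4 ≤ (a - 1) ^ 2 / a ^ 2 := by
              rw [div_le_div_iff₀ (by norm_num) (by positivity)]
              nlinarith [sq_nonneg (a - 2)]
            have := mul_le_mul_of_nonneg_left hq hr0.le
            rw [he]
            linarith
        _ ≤ (a - 1) ^ 2 * (trigamma a - trigamma (R + a)) := by
            apply mul_le_mul_of_nonneg_left hstep (by positivity)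
    have h1 : ∀ᶠ a : ℝ in atTop, (a - 1) ^ 2 * (trigamma a - trigamma (R + a)) < r / 4 :=
      hcon.eventually_lt_const (by positivity)
    have h2 : ∀ᶠ a : ℝ in atTop, 2 ≤ a := eventually_ge_atTop 2
    obtain ⟨a, haa, hab⟩ := (h1.and h2).exists
    exact absurd (hlb a hab) (not_le.mpr haa)
end

section
/- The Units-ML incorrect-belief regularizer L = (S - K - α_{gt} + 1)/S, where S = ∑_k α_k with α_k ≥ 1 and K classes, is bounded in [0, 1], and its gradient with respect to any non-ground-truth logit under any of the three activations tends to 0 as the corresponding incorrect evidence e_k → ∞ (with S → ∞). -/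
open Finset Filter

noncomputable def sigmoid (x : ℝ) : ℝ := 1 / (1 + Real.exp (-x))

/-- The Units-ML incorrect-belief regularizer L = (S - K - α_gt + 1)/S is bounded
in [0,1], and its gradient with respect to a non-ground-truth logit, namely
(α_gt + K - 1)/S² times the activation derivative (1 for ReLU, sigmoid for
softplus, e_k for exp), tends to 0 as the incorrect evidence e_k → ∞. -/
theorem units_ml_reg_bounds_and_gradient (K : ℕ) (hK : 1 ≤ K) (gt k : Fin K)
    (hkgt : k ≠ gt) (e : Fin K → ℝ) (he : ∀ j, 0 ≤ e j)
    (α : Fin K → ℝ) (hα : ∀ j, α j = e j + 1)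
    (S : ℝ) (hS : S = (K : ℝ) + ∑ j, e j) :
    (0 ≤ (S - K - α gt + 1) / S ∧ (S - K - α gt + 1) / S ≤ 1) ∧
    (∀ C : ℝ, C = (K : ℝ) + ∑ j ∈ Finset.univ.erase k, e j →
      (Tendsto (fun t : ℝ => (α gt + K - 1) / (C + t) ^ 2 * 1)
          atTop (nhds 0) ∧
        Tendsto (fun t : ℝ => (α gt + K - 1) / (C + t) ^ 2 * sigmoid t)
          atTop (nhds 0) ∧
        Tendsto (fun t : ℝ => (α gt + K - 1) / (C + t) ^ 2 * t)
          atTop (nhds 0))) := by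
  have hK' : (1:ℝ) ≤ K := by exact_mod_cast hK
  have hsum : 0 ≤ ∑ j, e j := Finset.sum_nonneg fun j _ => he j
  have hSpos : 0 < S := by rw [hS]; linarith
  have hnum : S - (K:ℝ) - α gt + 1 = ∑ j ∈ Finset.univ.erase gt, e j := by
    rw [hS, hα]
    rw [← Finset.sum_erase_add _ _ (Finset.mem_univ gt)]
    ring
  refine ⟨⟨?_, ?_⟩, ?_⟩
  · apply div_nonneg _ hSpos.le
    rw [hnum]
    exact Finset.sum_nonneg fun j _ => he j
  · rw [div_le_one hSpos]
    have h1 : 1 ≤ α gt := by rw [hα]; linarith [he gt]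
    linarith
  · intro C hC
    set a := α gt + (K:ℝ) - 1 with ha
    have h1 : Tendsto (fun t : ℝ => C + t) atTop atTop :=
      tendsto_atTop_add_const_left _ _ tendsto_id
    have hsq : Tendsto (fun t : ℝ => (C + t) ^ 2) atTop atTop :=
      (tendsto_pow_atTop (two_ne_zero)).comp h1
    have hbase : Tendsto (fun t : ℝ => a / (C + t) ^ 2) atTop (nhds 0) :=
      tendsto_const_nhds.div_atTop hsq
    refine ⟨by simpa using hbase, ?_, ?_⟩
    · apply hbase.zero_mul_isBoundedUnder_le
      refine isBoundedUnder_of ⟨1, fun t => ?_⟩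
      have hx : 0 < 1 + Real.exp (-t) := by positivity
      have : sigmoid t ≤ 1 := by
        rw [sigmoid, div_le_one hx]
        linarith [Real.exp_pos (-t)]
      have h0 : 0 ≤ sigmoid t := by
        rw [sigmoid]; positivity
      simp [Real.norm_eq_abs, abs_le]
      constructor <;> [linarith; exact this]
    · have key : Tendsto (fun u : ℝ => a / u * ((u - C) / u)) atTop (nhds 0) := by
        have hA : Tendsto (fun u : ℝ => a / u) atTop (nhds 0) :=
          tendsto_const_nhds.div_atTop tendsto_id
        have hB : Tendsto (fun u : ℝ => (u - C) / u) atTop (nhds 1) := by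
          have : Tendsto (fun u : ℝ => 1 - C / u) atTop (nhds (1 - 0)) :=
            tendsto_const_nhds.sub (tendsto_const_nhds.div_atTop tendsto_id)
          apply this.congr' ?_ |>.mono_right (by simp)
          filter_upwards [eventually_gt_atTop 0] with u hu
          field_simp
        simpa using hA.mul hB
      have := key.comp h1
      apply this.congr'
      filter_upwards [eventually_gt_atTop (max 0 (-C))] with t ht
      have htC : 0 < C + t := by
        have := lt_of_le_of_lt (le_max_right 0 (-C)) ht
        linarith
      show a / (C + t) * ((C + t - C) / (C + t)) = a / (C + t) ^ 2 * t
      rw [show C + t - C = t from by ring, div_mul_div_comm, ← sq,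
        div_mul_eq_mul_div, mul_comm]
end
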